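/- arXiv:2001.01552 — 3 statements merged into one kernel-verified Lean document; each statement's English description precedes it below -/
import Mathlib

section
/- For all real numbers c, k, s ≥ 1 and all positive integers d, there exists a real number δ such that the following holds. Let G be a finite graph, ≺ a linear ordering of V(G), and ι, ω functions assigning shapes in ℝ^d to vertices of G, satisfying: (a) for every v ∈ V(G), ω(v) is convex and ι(v) ⊆ ω(v); (b) for every x ∈ ℝ^d, there exist at most c vertices v with x ∈ ι(v); (c) for all u, v ∈ V(G) with u ≺ v, ω(v) ≤_k ω(u) and ω(v) ⊑_s ι(u); (d) for every edge uv ∈ E(G) with u ≺ v, ω(v) ∩ ι(u) ≠ ∅. Then col_{≺,r}(G) ≤ δ · r^d for every positive integer r. -/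
/-!
Fix `v` and put `W = ω v`. A vertex `x ≠ v` of `L(v)` has a neighbour `z ≻ x` reached from `v` by
a path of length `< r` all of whose vertices are `v` or `≻ v`. Each `ω` on that path has a translate
inside `k • W`, so its difference set lies in `k • (W - W)`; consecutive `ω`'s meet, so `ω z` comes
within `r k (W - W)` of `W`. The edge `xz` gives a point of `ι x` in `ω z`, at which `ω v ⊑ₛ ι x`
supplies a translate of `W` meeting `ι x` in volume `≥ vol W / s`; all these translates lie in one
body `K = x₀ + (r k + 2) • (W - W)`. By thinness `|L(v)| vol W / s ≤ c vol K`, and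
`vol (W - W) ≤ (4d)^d vol W`, seen by comparing `W` with an inscribed simplex of maximal volume.
-/

open MeasureTheory Set Pointwise Metric Function
open scoped RealInnerProductSpace ENNReal

noncomputable section

/-- `ℝ^d` as a Euclidean space. -/
abbrev Euc (d : ℕ) := EuclideanSpace ℝ (Fin d)

/-- A shape: a compact set that is non-degenerate, i.e. not contained in a proper
affine subspace. -/
def IsShape {d : ℕ} (B : Set (Euc d)) : Prop :=
  IsCompact B ∧ affineSpan ℝ B = ⊤

/-- `B₁ ⊑ₛ B₂`: for every `x ∈ B₂` there is a translate `B₁'` of `B₁` with `x ∈ B₁'`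
and `vol (B₁' ∩ B₂) ≥ vol B₁ / s`. -/
def SqIn {d : ℕ} (s : ℝ) (B₁ B₂ : Set (Euc d)) : Prop :=
  ∀ x ∈ B₂, ∃ v : Euc d, x ∈ v +ᵥ B₁ ∧
    volume B₁ / ENNReal.ofReal s ≤ volume ((v +ᵥ B₁) ∩ B₂)

/-- `B₁` and `B₂` are `⊑ₛ`-comparable. -/
def SqComparable {d : ℕ} (s : ℝ) (B₁ B₂ : Set (Euc d)) : Prop :=
  SqIn s B₁ B₂ ∨ SqIn s B₂ B₁

/-- `B₁ ≤ₖ B₂`: some translate of `B₁` is contained in `k • B₂`. -/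
def LeK {d : ℕ} (k : ℝ) (B₁ B₂ : Set (Euc d)) : Prop :=
  ∃ v : Euc d, v +ᵥ B₁ ⊆ k • B₂

/-- `B₁ ≤_{k,s} B₂`: for every `x ∈ k • B₂` there are a translate `B₁'` of `B₁` and a
translate `B₁''` of `s • B₁` with `x ∈ B₁''` and `B₁' ⊆ B₁'' ∩ k • B₂`. -/
def LeKS {d : ℕ} (k s : ℝ) (B₁ B₂ : Set (Euc d)) : Prop :=
  ∀ x ∈ k • B₂, ∃ v w : Euc d,
    x ∈ w +ᵥ (s • B₁) ∧ v +ᵥ B₁ ⊆ (w +ᵥ (s • B₁)) ∩ (k • B₂)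

/-- An intersection representation of a graph in `ℝ^d`. -/
def IsIntersectionRep {V : Type*} {d : ℕ} (G : SimpleGraph V) (φ : V → Set (Euc d)) : Prop :=
  (∀ v, (φ v).Nonempty) ∧ ∀ u v : V, u ≠ v → ((φ u ∩ φ v).Nonempty ↔ G.Adj u v)

/-- A representation is `c`-thin if every point lies in at most `c` of the sets. -/
def IsThin {V : Type*} {d : ℕ} (c : ℝ) (φ : V → Set (Euc d)) : Prop :=
  ∀ x : Euc d, ({v : V | x ∈ φ v}.ncard : ℝ) ≤ c

/-- A `(c,⊑ₛ)`-tame representation. -/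
def IsTame {V : Type*} {d : ℕ} (c s : ℝ) (G : SimpleGraph V) (φ : V → Set (Euc d)) : Prop :=
  IsIntersectionRep G φ ∧ IsThin c φ ∧
    (∀ v, Convex ℝ (φ v) ∧ IsShape (φ v)) ∧
    ∀ u v : V, SqComparable s (φ u) (φ v)

/-- An `S`-shaped representation: each vertex is assigned a translate of a shape in `S`. -/
def IsSShaped {V : Type*} {d : ℕ} (S : Set (Set (Euc d))) (φ : V → Set (Euc d)) : Prop :=
  ∀ v, ∃ B ∈ S, ∃ t : Euc d, φ v = t +ᵥ B

/-- `X` is a balanced separator: every component of `G - X` has at most `(2/3)|V(G)|`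
vertices. -/
def IsBalancedSeparator {V : Type*} [Fintype V] (G : SimpleGraph V) (X : Set V) : Prop :=
  ∀ C : (G.induce Xᶜ).ConnectedComponent,
    (C.supp.ncard : ℝ) ≤ 2 / 3 * Fintype.card V

/-- `L_{G,≺,r}(v)`, where the linear ordering `≺` is encoded by an injective `ρ : V → ℕ`:
the set of vertices `x ⪯ v` reachable from `v` by a path of length at most `r` all of whose
internal vertices are `≻ v`. -/
def Lset {V : Type*} (G : SimpleGraph V) (ρ : V → ℕ) (r : ℕ) (v : V) : Set V :=
  {x | ρ x ≤ ρ v ∧ ∃ p : G.Walk v x, p.IsPath ∧ p.length ≤ r ∧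
    ∀ z ∈ p.support, z ≠ v → z ≠ x → ρ v < ρ z}

/-- The height of a set: the least `h ≥ 0` such that the set lies between two parallel
hyperplanes at distance `h`. -/
def heightOf {d : ℕ} (B : Set (Euc d)) : ℝ :=
  sInf {h : ℝ | 0 ≤ h ∧ ∃ u : Euc d, ‖u‖ = 1 ∧ ∃ a : ℝ,
    ∀ x ∈ B, a ≤ (inner ℝ u x : ℝ) ∧ (inner ℝ u x : ℝ) ≤ a + h}

/-- A parallelepiped with center `p` and sides `v₁, …, v_d`. -/
def IsParallelepiped {d : ℕ} (T : Set (Euc d)) : Prop :=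
  ∃ (p : Euc d) (v : Fin d → Euc d), LinearIndependent ℝ v ∧
    T = {x | ∃ α : Fin d → ℝ, (∀ i, α i ∈ Set.Icc (-1 : ℝ) 1) ∧ x = p + ∑ i, α i • v i}

/-- `T` is an envelope of `B`: a parallelepiped of smallest volume containing `B`. -/
def IsEnvelope {d : ℕ} (T B : Set (Euc d)) : Prop :=
  IsParallelepiped T ∧ B ⊆ T ∧
    ∀ T' : Set (Euc d), IsParallelepiped T' → B ⊆ T' → volume T ≤ volume T'

/-- A box in `ℝ^d`: a product of `d` closed intervals. -/
def IsBox {d : ℕ} (B : Set (Euc d)) : Prop :=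
  ∃ a b : Fin d → ℝ, B = {x : Euc d | ∀ i, x i ∈ Set.Icc (a i) (b i)}

/-- `Q` is `k'`-fat: every ball `B` centered in `Q` satisfies
`vol (B ∩ Q) ≥ min (vol B / k') (vol Q)`. -/
def IsFat {d : ℕ} (k' : ℝ) (Q : Set (Euc d)) : Prop :=
  ∀ x ∈ Q, ∀ ρ : ℝ, 0 < ρ →
    min (volume (Metric.closedBall x ρ) / ENNReal.ofReal k') (volume Q)
      ≤ volume (Metric.closedBall x ρ ∩ Q)

/-- The strong product of two simple graphs. -/
def strongProd {α β : Type*} (G : SimpleGraph α) (H : SimpleGraph β) :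
    SimpleGraph (α × β) where
  Adj x y := x ≠ y ∧ (x.1 = y.1 ∨ G.Adj x.1 y.1) ∧ (x.2 = y.2 ∨ H.Adj x.2 y.2)
  symm := by
    constructor
    rintro ⟨a1, a2⟩ ⟨b1, b2⟩ ⟨hne, h1, h2⟩
    refine ⟨hne.symm, ?_, ?_⟩
    · rcases h1 with h | h
      · exact Or.inl h.symm
      · exact Or.inr h.symm
    · rcases h2 with h | h
      · exact Or.inl h.symm
      · exact Or.inr h.symm
  loopless := by
    constructor
    rintro ⟨a1, a2⟩ ⟨hne, -, -⟩
    exact hne rfl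

/-- The graph `G⁺(N, l)`: add hubs `v₁, …, v_N` and internally disjoint paths of length `l`
from each hub to each vertex of `G`.  The internal vertices of the path from hub `i` to
vertex `u` are `(i, u, 0), …, (i, u, l-2)`. -/
def plusGraph {V : Type*} (G : SimpleGraph V) (N l : ℕ) :
    SimpleGraph (V ⊕ (Fin N ⊕ Fin N × V × Fin (l - 1))) :=
  SimpleGraph.fromRel (fun x y =>
    match x, y with
    | Sum.inl u, Sum.inl w => G.Adj u w
    | Sum.inr (Sum.inl _), Sum.inl _ => l = 1
    | Sum.inr (Sum.inl i), Sum.inr (Sum.inr (j, _, t)) => i = j ∧ (t : ℕ) = 0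
    | Sum.inr (Sum.inr (i, u, t)), Sum.inr (Sum.inr (j, w, t')) =>
        i = j ∧ u = w ∧ (t' : ℕ) = (t : ℕ) + 1
    | Sum.inr (Sum.inr (_, u, t)), Sum.inl w => u = w ∧ (t : ℕ) = l - 2
    | _, _ => False)

/-- `γ_d`: the supremum over affine hyperplanes `H` of the `(d-1)`-dimensional Hausdorff
measure of the intersection of `H` with the unit cube. -/
def gammaConst (d : ℕ) : ℝ :=
  sSup {γ : ℝ | ∃ (u : Euc d) (a : ℝ), ‖u‖ = 1 ∧
    γ = (MeasureTheory.Measure.hausdorffMeasure ((d : ℝ) - 1)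
      ({x : Euc d | (inner ℝ u x : ℝ) = a} ∩ {x : Euc d | ∀ i, x i ∈ Set.Icc (0 : ℝ) 1})).toReal}

/-- The sequence `ℓ_h`: `ℓ_1 = 1` and `ℓ_{h+1} = ℓ_h / (2(h+1))`. -/
def ellSeq : ℕ → ℝ
  | 0 => 2
  | n + 1 => ellSeq n / (2 * (n + 1))

/-- The trapezoid `T_h` with vertices `(0,0)`, `(ℓ_h,0)`, `(ℓ_h, hℓ_h)`, `(0, 2hℓ_h)`. -/
def trapezoidShape (h : ℕ) : Set (Euc 2) :=
  convexHull ℝ {(!₂[0, 0] : Euc 2), !₂[ellSeq h, 0], !₂[ellSeq h, h * ellSeq h],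
    !₂[0, 2 * h * ellSeq h]}

/-- An axis-aligned square `S_h` with sides of length `ℓ_h`. -/
def squareShape (h : ℕ) : Set (Euc 2) :=
  {x : Euc 2 | x 0 ∈ Set.Icc 0 (ellSeq h) ∧ x 1 ∈ Set.Icc 0 (ellSeq h)}

/-- The set `S*` of shapes. -/
def SStar : Set (Set (Euc 2)) :=
  {B | ∃ h : ℕ, 0 < h ∧ (B = trapezoidShape h ∨ B = squareShape h)}

/-- A class of finite graphs is `⊑`-representable. -/
def SqRepresentable (𝒢 : ∀ V : Type, Fintype V → SimpleGraph V → Prop) : Prop :=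
  ∃ d c s : ℕ, 0 < d ∧ 0 < c ∧ 0 < s ∧
    ∀ (V : Type) (instV : Fintype V) (G : SimpleGraph V), 𝒢 V instV G →
      ∃ S : Set (Set (Euc d)), (∀ B ∈ S, Convex ℝ B ∧ IsShape B) ∧
        S.Pairwise (SqComparable (s : ℝ)) ∧
        ∃ φ : V → Set (Euc d), IsIntersectionRep G φ ∧ IsThin (c : ℝ) φ ∧ IsSShaped S φ

end

open Matrix WithLp

lemma volume_cube (d : ℕ) (a b : ℝ) :
    volume {x : Euc d | ∀ i, x i ∈ Icc a b} = ENNReal.ofReal (b - a) ^ d := by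
  have hpre : {x : Euc d | ∀ i, x i ∈ Icc a b} =
      (MeasurableEquiv.toLp 2 (Fin d → ℝ)).symm ⁻¹' univ.pi fun _ => Icc a b := by
    ext x; simp only [mem_preimage, mem_pi, mem_univ, true_implies, mem_ofPred_eq]; rfl
  rw [hpre, (EuclideanSpace.volume_preserving_symm_measurableEquiv_toLp (Fin d)).measure_preimage
    (by measurability), volume_pi_pi]
  simp [Real.volume_Icc]

section DifferenceBody

variable {d : ℕ}

def simplexEdgeMatrix (g : Fin (d + 1) → Euc d) : Matrix (Fin d) (Fin d) ℝ :=
  Matrix.of fun i j => (g j.succ - g 0) i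

lemma simplexEdgeMatrix_update_succ (g : Fin (d + 1) → Euc d) (m : Fin d) (x : Euc d) :
    simplexEdgeMatrix (update g m.succ x) = (simplexEdgeMatrix g).updateCol m (ofLp (x - g 0)) := by
  ext i j
  rcases eq_or_ne j m with rfl | hj
  · simp [simplexEdgeMatrix, update_of_ne (Fin.succ_ne_zero j).symm]
  · simp [simplexEdgeMatrix, updateCol_ne hj, update_of_ne (Fin.succ_ne_zero m).symm,
      update_of_ne ((Fin.succ_injective d).ne hj)]

lemma toLpLin_simplexEdgeMatrix_apply (g : Fin (d + 1) → Euc d) (c : Euc d) :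
    toLpLin 2 2 (simplexEdgeMatrix g) c = ∑ j, c j • (g j.succ - g 0) := by
  ext i
  simp [toLpLin_apply, mulVec, dotProduct, simplexEdgeMatrix, mul_comm]

lemma det_toLpLin (M : Matrix (Fin d) (Fin d) ℝ) :
    LinearMap.det (toLpLin 2 2 M : Euc d →ₗ[ℝ] Euc d) = M.det := by
  rw [toLpLin_eq_toLin, LinearMap.det_toLin]

lemma simplexEdgeMatrix_of_single (x₀ : Euc d) (ε : ℝ) :
    simplexEdgeMatrix (Fin.cons x₀ fun j => x₀ + ε • EuclideanSpace.single j 1) =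
      ε • (1 : Matrix (Fin d) (Fin d) ℝ) := by
  ext i j
  simp [simplexEdgeMatrix, Matrix.one_apply]

lemma continuous_det_simplexEdgeMatrix :
    Continuous fun g : Fin (d + 1) → Euc d => (simplexEdgeMatrix g).det := by
  refine Continuous.matrix_det (continuous_pi fun i => continuous_pi fun j => ?_)
  have : Continuous fun g : Fin (d + 1) → Euc d => g j.succ - g 0 := by fun_prop
  exact (EuclideanSpace.proj i).continuous.comp this

def IsMaxVolumeSimplex (W : Set (Euc d)) (g : Fin (d + 1) → Euc d) : Prop :=
  (∀ i, g i ∈ W) ∧ ∀ g' : Fin (d + 1) → Euc d, (∀ i, g' i ∈ W) →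
    |(simplexEdgeMatrix g').det| ≤ |(simplexEdgeMatrix g).det|

lemma IsCompact.exists_isMaxVolumeSimplex {W : Set (Euc d)} (hW : IsCompact W)
    (hint : (interior W).Nonempty) :
    ∃ g, IsMaxVolumeSimplex W g ∧ (simplexEdgeMatrix g).det ≠ 0 := by
  obtain ⟨x₀, hx₀⟩ := hint
  obtain ⟨ε, hε, hball⟩ := Metric.isOpen_iff.1 isOpen_interior x₀ hx₀
  have hx₀W : x₀ ∈ W := interior_subset hx₀
  obtain ⟨g, hgW, hmax⟩ := (isCompact_univ_pi fun _ => hW).exists_isMaxOn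
    ⟨fun _ => x₀, fun _ _ => hx₀W⟩ continuous_det_simplexEdgeMatrix.abs.continuousOn
  refine ⟨g, ⟨fun i => hgW i trivial, fun g' hg' => hmax fun i _ => hg' i⟩, fun hdet => ?_⟩
  set g₁ : Fin (d + 1) → Euc d := Fin.cons x₀ fun j => x₀ + (ε / 2) • EuclideanSpace.single j 1
  have hg₁W : ∀ i, g₁ i ∈ W := Fin.cases hx₀W fun j => interior_subset <| hball <| by
    simp [g₁, norm_smul, abs_of_pos hε]
    linarith
  have := hmax (fun i _ => hg₁W i)
  simp only [mem_ofPred_eq, hdet, abs_zero, g₁, simplexEdgeMatrix_of_single, det_smul, det_one,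
    Fintype.card_fin, mul_one] at this
  exact (abs_pos.2 (pow_pos (half_pos hε) d).ne').not_ge this

section MaximalSimplex

variable {W : Set (Euc d)} {g : Fin (d + 1) → Euc d}

-- By Cramer's rule, moving vertex `m + 1` to `x` multiplies the determinant by the `m`-th
-- coordinate of `x - g 0` in the edge basis, so maximality bounds that coordinate by `1`.
lemma IsMaxVolumeSimplex.abs_inv_mulVec_le_one (hg : IsMaxVolumeSimplex W g)
    (hdet : (simplexEdgeMatrix g).det ≠ 0) {x : Euc d} (hx : x ∈ W) (m : Fin d) :
    |((simplexEdgeMatrix g)⁻¹ *ᵥ ofLp (x - g 0)) m| ≤ 1 := by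
  have hupd : ∀ i, update g m.succ x i ∈ W := by
    intro i
    rcases eq_or_ne i m.succ with rfl | hi
    · simpa using hx
    · simpa [update_of_ne hi] using hg.1 i
  have h := hg.2 _ hupd
  rw [simplexEdgeMatrix_update_succ, ← cramer_apply,
    ← det_smul_inv_mulVec_eq_cramer _ _ (isUnit_iff_ne_zero.2 hdet), Pi.smul_apply, smul_eq_mul,
    abs_mul] at h
  exact (mul_le_iff_le_one_right (abs_pos.2 hdet)).1 h

lemma IsMaxVolumeSimplex.sub_self_subset_image_cube (hg : IsMaxVolumeSimplex W g)
    (hdet : (simplexEdgeMatrix g).det ≠ 0) :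
    W - W ⊆ toLpLin 2 2 (simplexEdgeMatrix g) '' {c : Euc d | ∀ i, c i ∈ Icc (-2) 2} := by
  rintro _ ⟨x, hx, y, hy, rfl⟩
  set M := simplexEdgeMatrix g
  let a : Euc d → Euc d := fun z => toLp 2 (M⁻¹ *ᵥ ofLp (z - g 0))
  have ha : ∀ z, toLpLin 2 2 M (a z) = z - g 0 := by
    intro z
    simp [a, toLpLin_apply, mulVec_mulVec, mul_nonsing_inv _ (isUnit_iff_ne_zero.2 hdet)]
  refine ⟨a x - a y, fun i => ?_, by rw [map_sub, ha, ha, sub_sub_sub_cancel_right]⟩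
  have hx' := abs_le.1 (hg.abs_inv_mulVec_le_one hdet hx i)
  have hy' := abs_le.1 (hg.abs_inv_mulVec_le_one hdet hy i)
  simp only [PiLp.sub_apply, a]
  constructor <;> linarith

lemma vadd_image_cube_subset (hd : 0 < d) (hW : Convex ℝ W) (hgW : ∀ i, g i ∈ W) :
    g 0 +ᵥ toLpLin 2 2 (simplexEdgeMatrix g) '' {c : Euc d | ∀ i, c i ∈ Icc 0 (1 / (d : ℝ))} ⊆
      W := by
  rintro _ ⟨_, ⟨c, hc, rfl⟩, rfl⟩
  have hsum : ∑ j, c j ≤ 1 := calc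
    ∑ j, c j ≤ ∑ _j : Fin d, (1 / d : ℝ) := Finset.sum_le_sum fun j _ => (hc j).2
    _ = 1 := by simp [hd.ne']
  set w : Fin (d + 1) → ℝ := Fin.cons (1 - ∑ j, c j) fun j => c j
  have hw0 : ∀ i, 0 ≤ w i := Fin.cases (by simpa [w]) fun j => by simpa [w] using (hc j).1
  have hw1 : ∑ i, w i = 1 := by simp [w, Fin.sum_univ_succ]
  convert hW.sum_mem (fun i _ => hw0 i) hw1 (fun i _ => hgW i) using 1
  dsimp only
  rw [vadd_eq_add, toLpLin_simplexEdgeMatrix_apply, Fin.sum_univ_succ]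
  simp [w, smul_sub, Finset.sum_sub_distrib, ← Finset.sum_smul, sub_smul]
  module

end MaximalSimplex

theorem Convex.volume_sub_self_le (hd : 0 < d) {W : Set (Euc d)} (hconv : Convex ℝ W)
    (hcomp : IsCompact W) (hint : (interior W).Nonempty) :
    volume (W - W) ≤ ENNReal.ofReal ((4 * d) ^ d) * volume W := by
  obtain ⟨g, hg, hdet⟩ := hcomp.exists_isMaxVolumeSimplex hint
  set D := |(simplexEdgeMatrix g).det|
  have hvol : ∀ a b : ℝ, a ≤ b → volume (toLpLin 2 2 (simplexEdgeMatrix g) ''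
      {c : Euc d | ∀ i, c i ∈ Icc a b}) = ENNReal.ofReal (D * (b - a) ^ d) := by
    intro a b hab
    rw [Measure.addHaar_image_linearMap, det_toLpLin, volume_cube, ← ENNReal.ofReal_pow
      (sub_nonneg.2 hab), ← ENNReal.ofReal_mul (abs_nonneg _)]
  calc volume (W - W)
      ≤ volume (toLpLin 2 2 (simplexEdgeMatrix g) '' {c : Euc d | ∀ i, c i ∈ Icc (-2) 2}) :=
        measure_mono (hg.sub_self_subset_image_cube hdet)
    _ = ENNReal.ofReal ((4 * d) ^ d) * ENNReal.ofReal (D * (1 / d - 0) ^ d) := by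
        rw [hvol _ _ (by norm_num), ← ENNReal.ofReal_mul (by positivity)]
        congr 1
        have : (d : ℝ) ≠ 0 := Nat.cast_ne_zero.2 hd.ne'
        rw [sub_zero, mul_pow, div_pow]
        field_simp
        norm_num
    _ = ENNReal.ofReal ((4 * d) ^ d) * volume (g 0 +ᵥ toLpLin 2 2 (simplexEdgeMatrix g) ''
          {c : Euc d | ∀ i, c i ∈ Icc 0 (1 / (d : ℝ))}) := by
        rw [measure_vadd, hvol _ _ (by positivity)]
    _ ≤ ENNReal.ofReal ((4 * d) ^ d) * volume W := by
        gcongr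
        exact vadd_image_cube_subset hd hconv hg.1

lemma Convex.volume_vadd_smul_sub_self_le (hd : 0 < d) {W : Set (Euc d)} (hconv : Convex ℝ W)
    (hcomp : IsCompact W) (hint : (interior W).Nonempty) (x₀ : Euc d) {a : ℝ} (ha : 0 ≤ a) :
    volume (x₀ +ᵥ a • (W - W)) ≤ ENNReal.ofReal (a ^ d * (4 * d) ^ d) * volume W := by
  rw [measure_vadd, Measure.addHaar_smul, finrank_euclideanSpace_fin,
    abs_of_nonneg (pow_nonneg ha d), ENNReal.ofReal_mul (pow_nonneg ha d), mul_assoc]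
  gcongr
  exact hconv.volume_sub_self_le hd hcomp hint

end DifferenceBody

lemma Convex.balanced_sub_self {E : Type*} [AddCommGroup E] [Module ℝ E] {W : Set E}
    (hW : Convex ℝ W) : Balanced ℝ (W - W) :=
  (balanced_iff_neg_mem (hW.sub hW)).2 fun _ ⟨x, hx, y, hy, hxy⟩ =>
    ⟨y, hy, x, hx, by rw [← hxy, neg_sub]⟩

lemma LeK.sub_self_subset {d : ℕ} {k : ℝ} {A B : Set (Euc d)} (h : LeK k B A) :
    B - B ⊆ k • (A - A) := by
  obtain ⟨t, ht⟩ := h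
  rintro _ ⟨b₁, hb₁, b₂, hb₂, rfl⟩
  obtain ⟨a₁, ha₁, he₁⟩ := ht (vadd_mem_vadd_set hb₁ : t +ᵥ b₁ ∈ t +ᵥ B)
  obtain ⟨a₂, ha₂, he₂⟩ := ht (vadd_mem_vadd_set hb₂ : t +ᵥ b₂ ∈ t +ᵥ B)
  refine ⟨a₁ - a₂, sub_mem_sub ha₁ ha₂, ?_⟩
  simp only [vadd_eq_add] at he₁ he₂
  change k • (a₁ - a₂) = b₁ - b₂
  rw [smul_sub, he₁, he₂, add_sub_add_left_eq_sub]

lemma Convex.vadd_subset_vadd_smul_sub_self {E : Type*} [AddCommGroup E] [Module ℝ E]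
    {W : Set E} (hW : Convex ℝ W) {x₀ y q t : E} {e : ℝ} (he : 0 ≤ e) (hx₀ : x₀ ∈ W)
    (hy : y ∈ W) (hq : q ∈ t +ᵥ W) (hqy : q - y ∈ e • (W - W)) :
    t +ᵥ W ⊆ x₀ +ᵥ (e + 2) • (W - W) := by
  obtain ⟨w₁, hw₁, rfl⟩ := mem_vadd_set.1 hq
  rintro _ ⟨w₂, hw₂, rfl⟩
  have hsplit : (e + 2) • (W - W) = (1 : ℝ) • (W - W) + (e • (W - W) + (1 : ℝ) • (W - W)) := by
    rw [← (hW.sub hW).add_smul he zero_le_one, ← (hW.sub hW).add_smul zero_le_one (by linarith)]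
    ring_nf
  refine ⟨(y - x₀) + (((t +ᵥ w₁) - y) + (w₂ - w₁)), ?_, ?_⟩
  · rw [hsplit, one_smul]
    exact add_mem_add (sub_mem_sub hy hx₀) (add_mem_add hqy (sub_mem_sub hw₂ hw₁))
  · simp only [vadd_eq_add]
    abel

lemma SimpleGraph.Walk.exists_sub_mem_length_smul {V E : Type*} [AddCommGroup E] [Module ℝ E]
    {G : SimpleGraph V} {ω : V → Set E} {U : Set E} (hU : Convex ℝ U)
    (hadj : ∀ a b, G.Adj a b → (ω a ∩ ω b).Nonempty) {a b : V} (p : G.Walk a b)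
    (hp : ∀ z ∈ p.support, ω z - ω z ⊆ U) {y : E} (hy : y ∈ ω b) :
    ∃ y' ∈ ω a, y - y' ∈ (p.length : ℝ) • U := by
  induction p with
  | nil =>
    have h0 : (0 : E) ∈ U := by simpa using hp _ (by simp) (sub_mem_sub hy hy)
    exact ⟨y, hy, by simp [zero_smul_set ⟨0, h0⟩]⟩
  | @cons a c b hac q ih =>
    obtain ⟨y', hy', hyy'⟩ := ih (fun z hz => hp z (by simp [hz])) hy
    obtain ⟨z, hza, hzc⟩ := hadj _ _ hac
    refine ⟨z, hza, ?_⟩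
    rw [← sub_add_sub_cancel y y' z, length_cons, Nat.cast_add, Nat.cast_one,
      hU.add_smul (Nat.cast_nonneg _) zero_le_one, one_smul]
    exact add_mem_add hyy' (hp c (by simp) (sub_mem_sub hy' hzc))

lemma sum_measure_inter_le_of_ncard_le {α V : Type*} [MeasurableSpace α] [Finite V]
    (μ : Measure α) {ι : V → Set α} (hι : ∀ v, MeasurableSet (ι v)) {c : ℝ}
    (hthin : ∀ x, ({v | x ∈ ι v}.ncard : ℝ) ≤ c) (K : Set α) (F : Finset V) :
    ∑ v ∈ F, μ (K ∩ ι v) ≤ ENNReal.ofReal c * μ K := by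
  classical
  calc ∑ v ∈ F, μ (K ∩ ι v) = ∫⁻ x in K, ∑ v ∈ F, (ι v).indicator 1 x ∂μ := by
        rw [lintegral_finsetSum _ fun v _ => measurable_one.indicator (hι v)]
        refine Finset.sum_congr rfl fun v _ => ?_
        rw [lintegral_indicator_one (hι v), Measure.restrict_apply (hι v), inter_comm]
    _ ≤ ∫⁻ _ in K, ENNReal.ofReal c ∂μ := by
        refine lintegral_mono fun x => ?_
        have hcard : ((F.filter (x ∈ ι ·)).card : ℝ) ≤ c := by
          refine le_trans ?_ (hthin x)
          rw [← ncard_coe_finset]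
          exact_mod_cast ncard_le_ncard (fun v hv => (Finset.mem_filter.1 hv).2) (toFinite _)
        simpa [indicator_apply, Finset.sum_boole] using ENNReal.ofReal_le_ofReal hcard
    _ = ENNReal.ofReal c * μ K := setLIntegral_const _ _

section Lset

variable {V : Type*} {G : SimpleGraph V} {ρ : V → ℕ} {r : ℕ} {v x : V}

lemma lt_of_mem_Lset (hρ : Injective ρ) (hx : x ∈ Lset G ρ r v) (hxv : x ≠ v) : ρ x < ρ v :=
  hx.1.lt_of_ne (hρ.ne hxv)

lemma exists_adj_walk_of_mem_Lset (hρ : Injective ρ) (hx : x ∈ Lset G ρ r v) (hxv : x ≠ v) :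
    ∃ z, G.Adj x z ∧ ρ x < ρ z ∧
      ∃ q : G.Walk v z, q.length < r ∧ ∀ z' ∈ q.support, z' = v ∨ ρ v < ρ z' := by
  have hρxv := lt_of_mem_Lset hρ hx hxv
  obtain ⟨-, p, hpath, hplen, hpint⟩ := hx
  obtain ⟨z, hxz, q, hq⟩ := p.reverse.exists_eq_cons_of_ne hxv
  have hxq : x ∉ q.support := by
    have := hpath.reverse
    rw [hq, SimpleGraph.Walk.cons_isPath_iff] at this
    exact this.2
  have hqp : ∀ z' ∈ q.support, z' ∈ p.support := fun z' hz' => by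
    simpa using (hq ▸ List.mem_cons_of_mem x hz' : z' ∈ p.reverse.support)
  have hqlen : q.length < r := by
    have := congrArg SimpleGraph.Walk.length hq
    simp only [SimpleGraph.Walk.length_reverse, SimpleGraph.Walk.length_cons] at this
    omega
  have hqint : ∀ z' ∈ q.support, z' = v ∨ ρ v < ρ z' := fun z' hz' =>
    (eq_or_ne z' v).imp_right fun hz'v => hpint z' (hqp z' hz') hz'v (ne_of_mem_of_not_mem hz' hxq)
  refine ⟨z, hxz, ?_, q.reverse, by simpa using hqlen, by simpa using hqint⟩
  rcases hqint z q.start_mem_support with rfl | h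
  exacts [hρxv, hρxv.trans h]

end Lset

section Representation

variable {V : Type*} {d : ℕ} {G : SimpleGraph V} {ρ : V → ℕ} {ι ω : V → Set (Euc d)} {k s : ℝ}
  {r : ℕ} {v x : V}

lemma inter_nonempty_of_adj (hρ : Injective ρ) (hι : ∀ u, ι u ⊆ ω u)
    (hedge : ∀ a b, G.Adj a b → ρ a < ρ b → (ω b ∩ ι a).Nonempty) {a b : V} (hab : G.Adj a b) :
    (ω a ∩ ω b).Nonempty := by
  rcases lt_or_gt_of_ne (hρ.ne hab.ne) with h | h
  · exact (hedge a b hab h).mono fun _ hy => ⟨hι a hy.2, hy.1⟩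
  · exact (hedge b a hab.symm h).mono fun _ hy => ⟨hy.1, hι b hy.2⟩

lemma exists_sub_mem_smul_of_mem_Lset (hρ : Injective ρ) (hι : ∀ u, ι u ⊆ ω u)
    (hedge : ∀ a b, G.Adj a b → ρ a < ρ b → (ω b ∩ ι a).Nonempty) (hk : 1 ≤ k)
    (hW : Convex ℝ (ω v)) (hLeK : ∀ u, ρ v < ρ u → LeK k (ω u) (ω v))
    (hx : x ∈ Lset G ρ r v) (hxv : x ≠ v) :
    ∃ q ∈ ι x, ∃ y ∈ ω v, q - y ∈ ((r : ℝ) * k) • (ω v - ω v) := by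
  obtain ⟨z, hxz, hρxz, p, hplen, hp⟩ := exists_adj_walk_of_mem_Lset hρ hx hxv
  obtain ⟨q, hqz, hqx⟩ := hedge x z hxz hρxz
  have hbal := hW.balanced_sub_self
  have hk0 : 0 ≤ k := zero_le_one.trans hk
  have hU : ∀ u ∈ p.support, ω u - ω u ⊆ k • (ω v - ω v) := by
    intro u hu
    rcases hp u hu with rfl | hvu
    · simpa using hbal.smul_mono (a := (1 : ℝ)) (b := k) (by simpa [abs_of_nonneg hk0] using hk)
    · exact (hLeK u hvu).sub_self_subset
  obtain ⟨y, hy, hqy⟩ := p.exists_sub_mem_length_smul ((hW.sub hW).smul k)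
    (fun _ _ => inter_nonempty_of_adj hρ hι hedge) hU hqz
  refine ⟨q, hqx, y, hy, hbal.smul_mono ?_ (by rwa [← mul_smul] at hqy)⟩
  rw [Real.norm_of_nonneg (by positivity), Real.norm_of_nonneg (by positivity)]
  gcongr

lemma volume_div_le_volume_inter_of_mem_Lset (hρ : Injective ρ) (hι : ∀ u, ι u ⊆ ω u)
    (hedge : ∀ a b, G.Adj a b → ρ a < ρ b → (ω b ∩ ι a).Nonempty) (hk : 1 ≤ k)
    (hW : Convex ℝ (ω v)) (hLeK : ∀ u, ρ v < ρ u → LeK k (ω u) (ω v))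
    (hSq : ∀ u, ρ u < ρ v → SqIn s (ω v) (ι u)) {x₀ : Euc d} (hx₀ : x₀ ∈ ω v)
    (hx : x ∈ Lset G ρ r v) (hxv : x ≠ v) :
    volume (ω v) / ENNReal.ofReal s ≤
      volume ((x₀ +ᵥ ((r : ℝ) * k + 2) • (ω v - ω v)) ∩ ι x) := by
  obtain ⟨q, hqx, y, hy, hqy⟩ := exists_sub_mem_smul_of_mem_Lset hρ hι hedge hk hW hLeK hx hxv
  obtain ⟨t, hqt, hvol⟩ := hSq x (lt_of_mem_Lset hρ hx hxv) q hqx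
  exact hvol.trans <| measure_mono <| inter_subset_inter_left _ <|
    hW.vadd_subset_vadd_smul_sub_self (by positivity) hx₀ hy hqt hqy

end Representation

theorem ncard_Lset_le {V : Type*} [Finite V] {d : ℕ} {G : SimpleGraph V} {ρ : V → ℕ}
    {ι ω : V → Set (Euc d)} {c k s : ℝ} (hd : 0 < d) (hc : 0 ≤ c) (hs : 0 < s) (hk : 1 ≤ k)
    (hρ : Injective ρ) (hιm : ∀ u, MeasurableSet (ι u)) (hι : ∀ u, ι u ⊆ ω u)
    (hthin : ∀ y, ({u | y ∈ ι u}.ncard : ℝ) ≤ c)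
    (hedge : ∀ a b, G.Adj a b → ρ a < ρ b → (ω b ∩ ι a).Nonempty) {v : V}
    (hW : Convex ℝ (ω v)) (hWc : IsCompact (ω v)) (hWi : (interior (ω v)).Nonempty)
    (hLeK : ∀ u, ρ v < ρ u → LeK k (ω u) (ω v)) (hSq : ∀ u, ρ u < ρ v → SqIn s (ω v) (ι u))
    (r : ℕ) :
    ((Lset G ρ r v).ncard : ℝ) ≤ c * ((r * k + 2) ^ d * (4 * d) ^ d) * s + 1 := by
  obtain ⟨x₀, hx₀⟩ := hWi
  set K := x₀ +ᵥ ((r : ℝ) * k + 2) • (ω v - ω v)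
  set F := (toFinite (Lset G ρ r v \ {v})).toFinset
  have hvolW₀ : volume (ω v) ≠ 0 := (Measure.measure_pos_of_nonempty_interior _ ⟨x₀, hx₀⟩).ne'
  have hvolW : volume (ω v) ≠ ⊤ := hWc.measure_lt_top.ne
  have hS₀ : ENNReal.ofReal s ≠ 0 := ENNReal.ofReal_pos.2 hs |>.ne'
  have hF : (F.card : ℝ≥0∞) * (volume (ω v) / ENNReal.ofReal s) ≤
      ENNReal.ofReal (c * ((r * k + 2) ^ d * (4 * d) ^ d)) * volume (ω v) := calc
    (F.card : ℝ≥0∞) * (volume (ω v) / ENNReal.ofReal s)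
        = ∑ _x ∈ F, volume (ω v) / ENNReal.ofReal s := by simp
    _ ≤ ∑ x ∈ F, volume (K ∩ ι x) := Finset.sum_le_sum fun x hx => by
        rw [Finite.mem_toFinset] at hx
        exact volume_div_le_volume_inter_of_mem_Lset hρ hι hedge hk hW hLeK hSq
          (interior_subset hx₀) hx.1 hx.2
    _ ≤ ENNReal.ofReal c * volume K := sum_measure_inter_le_of_ncard_le volume hιm hthin K F
    _ ≤ _ := by
        rw [ENNReal.ofReal_mul hc, mul_assoc]
        gcongr
        exact hW.volume_vadd_smul_sub_self_le hd hWc ⟨x₀, hx₀⟩ x₀ (by positivity)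
  rw [← mul_div_assoc, ENNReal.div_le_iff hS₀ ENNReal.ofReal_ne_top, mul_right_comm,
    ENNReal.mul_le_mul_iff_left hvolW₀ hvolW, ← ENNReal.ofReal_mul (by positivity),
    ← ENNReal.ofReal_natCast, ENNReal.ofReal_le_ofReal_iff (by positivity)] at hF
  have hcard : (Lset G ρ r v).ncard = F.card + 1 := by
    rw [← ncard_eq_toFinset_card _ (toFinite _), ncard_sdiff_singleton_add_one _ (toFinite _)]
    exact ⟨le_rfl, .nil, .nil, Nat.zero_le _, fun z hz hzv _ => absurd (by simpa using hz) hzv⟩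
  rw [hcard, Nat.cast_add_one]
  linarith

theorem stmt7 (c k s : ℝ) (hc : 1 ≤ c) (hk : 1 ≤ k) (hs : 1 ≤ s) (d : ℕ) (hd : 0 < d) :
    ∃ δ : ℝ, ∀ (V : Type) [Fintype V] (G : SimpleGraph V) (ρ : V → ℕ),
      Function.Injective ρ →
      ∀ ι ω : V → Set (Euc d),
      (∀ v, IsShape (ι v) ∧ IsShape (ω v)) →
      (∀ v, Convex ℝ (ω v) ∧ ι v ⊆ ω v) →
      (∀ x : Euc d, ({v : V | x ∈ ι v}.ncard : ℝ) ≤ c) →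
      (∀ u v : V, ρ u < ρ v → LeK k (ω v) (ω u) ∧ SqIn s (ω v) (ι u)) →
      (∀ u v : V, G.Adj u v → ρ u < ρ v → (ω v ∩ ι u).Nonempty) →
      ∀ r : ℕ, 0 < r → ∀ v : V, ((Lset G ρ r v).ncard : ℝ) ≤ δ * (r : ℝ) ^ d := by
  refine ⟨c * ((3 * k) ^ d * (4 * d) ^ d) * s + 1, ?_⟩
  intro V _ G ρ hρ ι ω hshape hω hthin hord hedge r hr v
  have hWi : (interior (ω v)).Nonempty :=
    (hω v).1.interior_nonempty_iff_affineSpan_eq_top.2 (hshape v).2.2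
  have hr1 : (1 : ℝ) ≤ r := by exact_mod_cast hr
  calc ((Lset G ρ r v).ncard : ℝ)
      ≤ c * ((r * k + 2) ^ d * (4 * d) ^ d) * s + 1 :=
        ncard_Lset_le hd (by linarith) (by linarith) hk hρ
          (fun u => (hshape u).1.1.isClosed.measurableSet) (fun u => (hω u).2) hthin hedge
          (hω v).1 (hshape v).2.1 hWi (fun u h => (hord v u h).1) (fun u h => (hord u v h).2) r
    _ ≤ c * ((3 * k * r) ^ d * (4 * d) ^ d) * s + r ^ d := by
        gcongr
        · nlinarith
        · exact one_le_pow₀ hr1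
    _ = (c * ((3 * k) ^ d * (4 * d) ^ d) * s + 1) * r ^ d := by ring
end

section
/- For all positive integers d and k, there exists an integer k' such that every convex shape in ℝ^d with aspect ratio at most k is k'-fat. -/
open MeasureTheory Set Pointwise Metric Function
open scoped RealInnerProductSpace ENNReal

/-!
In every unit direction `u`, a compact set `Q` of height `w` has a point whose `u`-coordinate is at
least `w / 2` away from that of a fixed `p₀ ∈ Q`. Choosing such points `p₀ + vᵢ` one at a time, each
time in a direction orthogonal to the earlier `vⱼ`, makes every Gram–Schmidt vector of `v` have
norm at least `w / 2`, so the parallelepiped spanned by `v` has volume at least `(w / 2) ^ d`. By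
convexity `Q` contains its translate by `p₀` scaled by `1 / d`, hence `vol Q ≥ (w / (2d)) ^ d`.
Finally a ball of radius `ρ < diam Q` centred at `x ∈ Q` contains the image of `Q` under the
homothety of ratio `ρ / diam Q` about `x`; comparing with `vol (closedBall x ρ) ≤ (2ρ) ^ d` and
using `diam Q ≤ k w` gives fatness with `k' = (4kd) ^ d`.
-/

open InnerProductSpace Submodule Module

theorem Convex.vadd_inv_card_smul_parallelepiped_subset {E ι : Type*} [AddCommGroup E]
    [Module ℝ E] [Fintype ι] {Q : Set E} (hQ : Convex ℝ Q) {p₀ : E} (hp₀ : p₀ ∈ Q) {v : ι → E}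
    (hv : ∀ i, p₀ + v i ∈ Q) :
    p₀ +ᵥ ((Fintype.card ι : ℝ)⁻¹ • parallelepiped v) ⊆ Q := by
  rintro _ ⟨_, ⟨x, hx, rfl⟩, rfl⟩
  obtain ⟨t, ht, rfl⟩ := (mem_parallelepiped_iff v x).1 hx
  rcases isEmpty_or_nonempty ι with hι | hι
  · simpa using hp₀
  have hcard : (0 : ℝ) < Fintype.card ι := by exact_mod_cast Fintype.card_pos
  have hsum : p₀ + (Fintype.card ι : ℝ)⁻¹ • ∑ i, t i • v i
      = ∑ i, (Fintype.card ι : ℝ)⁻¹ • (p₀ + t i • v i) := by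
    rw [← Finset.smul_sum, Finset.sum_add_distrib, Finset.sum_const, Finset.card_univ, smul_add,
      ← Nat.cast_smul_eq_nsmul ℝ, smul_smul, inv_mul_cancel₀ hcard.ne', one_smul]
  change p₀ + _ ∈ Q
  rw [hsum]
  refine hQ.sum_mem (fun _ _ => by positivity) ?_ fun i _ =>
    hQ.add_smul_mem hp₀ (hv i) ⟨ht.1 i, ht.2 i⟩
  rw [Finset.sum_const, Finset.card_univ, nsmul_eq_mul, mul_inv_cancel₀ hcard.ne']

section GramSchmidt

variable {𝕜 E ι : Type*} [RCLike 𝕜] [NormedAddCommGroup E] [InnerProductSpace 𝕜 E]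
  [LinearOrder ι] [LocallyFiniteOrderBot ι] [WellFoundedLT ι]

theorem inner_eq_inner_gramSchmidt_of_forall_lt (f : ι → E) {w : E} {n : ι}
    (hw : ∀ i < n, inner 𝕜 w (gramSchmidt 𝕜 f i) = 0) :
    inner 𝕜 w (f n) = inner 𝕜 w (gramSchmidt 𝕜 f n) := by
  conv_lhs => rw [gramSchmidt_def'' 𝕜 f n]
  rw [inner_add_right, inner_sum, Finset.sum_eq_zero fun i hi => ?_, add_zero]
  rw [inner_smul_right, hw i (Finset.mem_Iio.1 hi), mul_zero]

theorem inner_gramSchmidt_self (f : ι → E) (n : ι) :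
    inner 𝕜 (gramSchmidt 𝕜 f n) (f n) = ‖gramSchmidt 𝕜 f n‖ ^ 2 := by
  rw [inner_eq_inner_gramSchmidt_of_forall_lt f fun i hi => gramSchmidt_orthogonal 𝕜 f hi.ne',
    inner_self_eq_norm_sq_to_K]

theorem inner_gramSchmidtNormed_self (f : ι → E) (n : ι) :
    inner 𝕜 (gramSchmidtNormed 𝕜 f n) (f n) = ‖gramSchmidt 𝕜 f n‖ := by
  rw [gramSchmidtNormed, inner_smul_left, inner_gramSchmidt_self]
  by_cases h : gramSchmidt 𝕜 f n = 0
  · simp [h]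
  · rw [← RCLike.ofReal_inv, RCLike.conj_ofReal, ← RCLike.ofReal_pow, ← RCLike.ofReal_mul]
    congr 1
    field_simp

theorem norm_inner_le_norm_mul_norm_gramSchmidt (f : ι → E) {w : E} {n : ι}
    (hw : ∀ i < n, inner 𝕜 w (f i) = 0) :
    ‖inner 𝕜 w (f n)‖ ≤ ‖w‖ * ‖gramSchmidt 𝕜 f n‖ := by
  rw [inner_eq_inner_gramSchmidt_of_forall_lt f fun i hi => ?_]
  · exact norm_inner_le_norm _ _
  have hspan : span 𝕜 (f '' Set.Iic i) ≤ (𝕜 ∙ w)ᗮ := span_le.2 <| by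
    rintro _ ⟨j, hj, rfl⟩
    exact mem_orthogonal_singleton_iff_inner_right.2 (hw j (lt_of_le_of_lt hj hi))
  exact mem_orthogonal_singleton_iff_inner_right.1 (hspan (gramSchmidt_mem_span 𝕜 f le_rfl))

end GramSchmidt

section FiniteDimensional

variable {E : Type*} [NormedAddCommGroup E] [InnerProductSpace ℝ E] [FiniteDimensional ℝ E]

theorem ofReal_pow_le_volume_parallelepiped [MeasurableSpace E] [BorelSpace E] {ι : Type*}
    [Fintype ι] [LinearOrder ι] [LocallyFiniteOrderBot ι] [WellFoundedLT ι]
    (h : finrank ℝ E = Fintype.card ι) {c : ℝ} (hc : 0 < c) {v : ι → E}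
    (hv : ∀ i, ∃ w : E, ‖w‖ = 1 ∧ (∀ j < i, ⟪w, v j⟫ = 0) ∧ c ≤ |⟪w, v i⟫|) :
    ENNReal.ofReal (c ^ Fintype.card ι) ≤ volume (parallelepiped v) := by
  classical
  set b := gramSchmidtOrthonormalBasis h v
  have hgs : ∀ i, c ≤ ‖gramSchmidt ℝ v i‖ := fun i => by
    obtain ⟨w, hw1, hw0, hwc⟩ := hv i
    simpa [hw1] using hwc.trans (norm_inner_le_norm_mul_norm_gramSchmidt v hw0)
  have hb : ∀ i, c ≤ ⟪b i, v i⟫ := fun i => by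
    have hne : gramSchmidtNormed ℝ v i ≠ 0 := smul_ne_zero
      (inv_ne_zero (by simpa using (hc.trans_le (hgs i)).ne'))
      (norm_pos_iff.1 (hc.trans_le (hgs i)))
    rw [gramSchmidtOrthonormalBasis_apply h hne, inner_gramSchmidtNormed_self]
    exact hgs i
  rw [← b.addHaar_eq_volume, Measure.addHaar_parallelepiped, gramSchmidtOrthonormalBasis_det]
  refine ENNReal.ofReal_le_ofReal ?_
  calc c ^ Fintype.card ι = ∏ _i : ι, c := by rw [Finset.prod_const, Finset.card_univ]
    _ ≤ ∏ i, ⟪b i, v i⟫ := Finset.prod_le_prod (fun _ _ => hc.le) fun i _ => hb i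
    _ ≤ _ := le_abs_self _

theorem exists_norm_eq_one_forall_inner_eq_zero {ι : Type*} [Fintype ι] (v : ι → E)
    (h : Fintype.card ι < finrank ℝ E) : ∃ u : E, ‖u‖ = 1 ∧ ∀ i, ⟪u, v i⟫ = 0 := by
  have hK : span ℝ (Set.range v) ≠ ⊤ := fun hK => by
    have := finrank_range_le_card (R := ℝ) v
    rw [Set.finrank, hK, finrank_top] at this
    omega
  have : Nontrivial (span ℝ (Set.range v))ᗮ :=
    nontrivial_iff_ne_bot.2 fun h => hK (orthogonal_eq_bot_iff.1 h)
  obtain ⟨⟨u, hu⟩, hu1⟩ := exists_norm_eq (span ℝ (Set.range v))ᗮ zero_le_one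
  exact ⟨u, hu1, fun i => inner_left_of_mem_orthogonal (subset_span (Set.mem_range_self i)) hu⟩

theorem exists_fin_family_of_forall_exists_le_abs_inner {S : Set E} {c : ℝ}
    (hS : ∀ u : E, ‖u‖ = 1 → ∃ v ∈ S, c ≤ |⟪u, v⟫|) :
    ∀ n ≤ finrank ℝ E, ∃ v : Fin n → E, (∀ i, v i ∈ S) ∧
      ∀ i, ∃ w : E, ‖w‖ = 1 ∧ (∀ j < i, ⟪w, v j⟫ = 0) ∧ c ≤ |⟪w, v i⟫|
  | 0, _ => ⟨Fin.elim0, fun i => i.elim0, fun i => i.elim0⟩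
  | n + 1, hn => by
    obtain ⟨v, hvS, hv⟩ := exists_fin_family_of_forall_exists_le_abs_inner hS n (by omega)
    obtain ⟨w, hw1, hw0⟩ := exists_norm_eq_one_forall_inner_eq_zero v (by simpa using hn)
    obtain ⟨x, hxS, hx⟩ := hS w hw1
    refine ⟨Fin.snoc v x, Fin.lastCases (by simpa) (by simpa using hvS), Fin.lastCases ?_ ?_⟩
    · refine ⟨w, hw1, Fin.lastCases (by simp) fun j _ => by simpa using hw0 j, by simpa⟩
    · intro i
      obtain ⟨w', hw'1, hw'0, hw'c⟩ := hv i
      refine ⟨w', hw'1, Fin.lastCases (fun h => ?_) fun j hj => ?_, by simpa⟩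
      · exact absurd h (not_lt.2 (Fin.castSucc_lt_last i).le)
      · simpa using hw'0 j (Fin.castSucc_lt_castSucc_iff.1 hj)

theorem Convex.ofReal_le_volume_of_forall_le_abs_inner [MeasurableSpace E] [BorelSpace E]
    {Q : Set E} (hQ : Convex ℝ Q) {p₀ : E} (hp₀ : p₀ ∈ Q) {c : ℝ} (hc : 0 < c)
    (hwide : ∀ u : E, ‖u‖ = 1 → ∃ p ∈ Q, c ≤ |⟪u, p - p₀⟫|) :
    ENNReal.ofReal ((c / finrank ℝ E) ^ finrank ℝ E) ≤ volume Q := by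
  set n := finrank ℝ E
  obtain ⟨v, hvQ, hv⟩ := exists_fin_family_of_forall_exists_le_abs_inner (S := {v | p₀ + v ∈ Q})
    (fun u hu => by
      obtain ⟨p, hp, hpc⟩ := hwide u hu
      exact ⟨p - p₀, by simpa using hp, hpc⟩) n le_rfl
  have hpar := ofReal_pow_le_volume_parallelepiped (Fintype.card_fin n).symm hc hv
  have hsub := hQ.vadd_inv_card_smul_parallelepiped_subset hp₀ hvQ
  rw [Fintype.card_fin] at hpar hsub
  calc ENNReal.ofReal ((c / n) ^ n)
        = ENNReal.ofReal ((n : ℝ)⁻¹ ^ n) * ENNReal.ofReal (c ^ n) := by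
        rw [← ENNReal.ofReal_mul (by positivity), ← mul_pow, inv_mul_eq_div]
    _ ≤ ENNReal.ofReal ((n : ℝ)⁻¹ ^ n) * volume (parallelepiped v) := by gcongr
    _ = volume (p₀ +ᵥ ((n : ℝ)⁻¹ • parallelepiped v)) := by
        rw [measure_vadd, Measure.addHaar_smul_of_nonneg _ (by positivity)]
    _ ≤ volume Q := measure_mono hsub

end FiniteDimensional

theorem EuclideanSpace.volume_closedBall_le {ι : Type*} [Fintype ι] (x : EuclideanSpace ℝ ι)
    {r : ℝ} (hr : 0 ≤ r) :
    volume (closedBall x r) ≤ ENNReal.ofReal ((2 * r) ^ Fintype.card ι) := by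
  rw [← Real.volume_pi_closedBall (WithLp.ofLp x) hr,
    ← (PiLp.volume_preserving_ofLp ι).measure_preimage measurableSet_closedBall.nullMeasurableSet]
  refine measure_mono fun y hy => ?_
  rw [mem_preimage, mem_closedBall, dist_pi_le_iff hr]
  exact fun i => (PiLp.dist_apply_le y x i).trans (mem_closedBall.1 hy)

theorem isFat_of_le_mul_volume {d : ℕ} {Q : Set (Euc d)} (hQ : Convex ℝ Q)
    (hb : Bornology.IsBounded Q) {k' : ℝ}
    (h : ENNReal.ofReal ((2 * diam Q) ^ d) ≤ ENNReal.ofReal k' * volume Q) : IsFat k' Q := by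
  intro x hx ρ hρ
  rcases le_total (diam Q) ρ with hD | hD
  · exact (min_le_right _ _).trans <| measure_mono fun y hy =>
      ⟨mem_closedBall.2 ((dist_le_diam_of_mem hb hy hx).trans hD), hy⟩
  have hD0 : 0 < diam Q := hρ.trans_le hD
  set t := ρ / diam Q with ht_def
  have ht : t ∈ Icc (0 : ℝ) 1 := ⟨by positivity, div_le_one_of_le₀ hD hD0.le⟩
  have hsub : AffineMap.homothety x t '' Q ⊆ closedBall x ρ ∩ Q := by
    rintro _ ⟨y, hy, rfl⟩
    refine ⟨mem_closedBall.2 ?_, AffineMap.homothety_eq_lineMap x t y ▸ hQ.lineMap_mem hx hy ht⟩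
    rw [dist_homothety_center, Real.norm_of_nonneg ht.1]
    calc t * dist x y ≤ t * diam Q := by gcongr; exact dist_le_diam_of_mem hb hx hy
      _ = ρ := div_mul_cancel₀ ρ hD0.ne'
  have hscale : ENNReal.ofReal ((2 * ρ) ^ d)
      = ENNReal.ofReal (t ^ d) * ENNReal.ofReal ((2 * diam Q) ^ d) := by
    rw [← ENNReal.ofReal_mul (by positivity), ← mul_pow]
    congr 2
    rw [ht_def]
    field_simp
  refine (min_le_left _ _).trans ?_
  calc volume (closedBall x ρ) / ENNReal.ofReal k'
        ≤ ENNReal.ofReal ((2 * ρ) ^ d) / ENNReal.ofReal k' := by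
        gcongr
        simpa using EuclideanSpace.volume_closedBall_le x hρ.le
    _ ≤ ENNReal.ofReal (t ^ d) * volume Q := ENNReal.div_le_of_le_mul <| by
        rw [hscale, mul_assoc, mul_comm (volume Q)]
        gcongr
    _ = volume (AffineMap.homothety x t '' Q) := by
        rw [Measure.addHaar_image_homothety, finrank_euclideanSpace_fin,
          abs_of_nonneg (by positivity)]
    _ ≤ volume (closedBall x ρ ∩ Q) := measure_mono hsub

theorem heightOf_le {d : ℕ} {B : Set (Euc d)} {u : Euc d} (hu : ‖u‖ = 1) {a h : ℝ} (hh : 0 ≤ h)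
    (hB : ∀ x ∈ B, a ≤ ⟪u, x⟫ ∧ ⟪u, x⟫ ≤ a + h) : heightOf B ≤ h :=
  csInf_le ⟨0, fun _ hx => hx.1⟩ ⟨hh, u, hu, a, hB⟩

theorem IsCompact.exists_heightOf_le_two_mul_abs_inner_sub {d : ℕ} {Q : Set (Euc d)}
    (hQ : IsCompact Q) {p₀ : Euc d} (hp₀ : p₀ ∈ Q) {u : Euc d} (hu : ‖u‖ = 1) :
    ∃ p ∈ Q, heightOf Q / 2 ≤ |⟪u, p - p₀⟫| := by
  have hcont : ContinuousOn (fun x => ⟪u, x⟫) Q :=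
    (continuous_const.inner continuous_id).continuousOn
  obtain ⟨p, hp, hmin⟩ := hQ.exists_isMinOn ⟨p₀, hp₀⟩ hcont
  obtain ⟨q, hq, hmax⟩ := hQ.exists_isMaxOn ⟨p₀, hp₀⟩ hcont
  have hh : heightOf Q ≤ ⟪u, q⟫ - ⟪u, p⟫ :=
    heightOf_le (a := ⟪u, p⟫) hu (sub_nonneg.2 (hmax hp)) fun x hx =>
      ⟨hmin hx, by rw [add_sub_cancel]; exact hmax hx⟩
  rcases le_total ⟪u, p₀⟫ ((⟪u, p⟫ + ⟪u, q⟫) / 2) with h | h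
  · exact ⟨q, hq, by rw [inner_sub_right]; exact le_abs.2 (Or.inl (by linarith))⟩
  · exact ⟨p, hp, by rw [inner_sub_right]; exact le_abs.2 (Or.inr (by linarith))⟩

theorem IsShape.nonempty {d : ℕ} {Q : Set (Euc d)} (hQ : IsShape Q) : Q.Nonempty :=
  AffineSubspace.nonempty_of_affineSpan_eq_top ℝ _ _ hQ.2

theorem IsShape.diam_pos {d : ℕ} (hd : 0 < d) {Q : Set (Euc d)} (hQ : IsShape Q) :
    0 < diam Q := by
  refine Metric.diam_pos (Set.not_subsingleton_iff.1 fun hs => ?_) hQ.1.isBounded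
  have : Nonempty (Fin d) := ⟨⟨0, hd⟩⟩
  exact not_subsingleton (Euc d)
    (AffineSubspace.subsingleton_of_subsingleton_span_eq_top hs hQ.2)

theorem stmt12_general (d k : ℕ) (hd : 0 < d) :
    ∃ k' : ℤ, ∀ Q : Set (Euc d), Convex ℝ Q → IsShape Q →
      Metric.diam Q ≤ k * heightOf Q → IsFat (k' : ℝ) Q := by
  refine ⟨(4 * k * d : ℤ) ^ d, fun Q hconv hQ haspect => ?_⟩
  obtain ⟨p₀, hp₀⟩ := hQ.nonempty
  have hw : 0 < heightOf Q :=
    pos_of_mul_pos_right ((hQ.diam_pos hd).trans_le haspect) k.cast_nonneg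
  have hvol := hconv.ofReal_le_volume_of_forall_le_abs_inner hp₀ (half_pos hw)
    fun u hu => hQ.1.exists_heightOf_le_two_mul_abs_inner_sub hp₀ hu
  rw [finrank_euclideanSpace_fin] at hvol
  refine isFat_of_le_mul_volume hconv hQ.1.isBounded ?_
  have hd' : (0 : ℝ) < d := Nat.cast_pos.2 hd
  calc ENNReal.ofReal ((2 * diam Q) ^ d)
        ≤ ENNReal.ofReal ((4 * k * d * (heightOf Q / 2 / d)) ^ d) := by
        gcongr ENNReal.ofReal (?_ ^ _)
        calc 2 * diam Q ≤ 2 * (k * heightOf Q) := by gcongr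
          _ = 4 * k * d * (heightOf Q / 2 / d) := by field_simp; ring
    _ = ENNReal.ofReal (((4 * k * d : ℤ) ^ d : ℤ) : ℝ)
          * ENNReal.ofReal ((heightOf Q / 2 / d) ^ d) := by
        rw [← ENNReal.ofReal_mul (by positivity), mul_pow]
        push_cast
        rfl
    _ ≤ _ := by gcongr

theorem stmt12 (d k : ℕ) (hd : 0 < d) (hk : 0 < k) :
    ∃ k' : ℤ, ∀ Q : Set (Euc d), Convex ℝ Q → IsShape Q →
      Metric.diam Q ≤ k * heightOf Q → IsFat (k' : ℝ) Q :=
  stmt12_general d k hd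
end

section
/- Let 𝓑 be a finite set of non-empty boxes in ℝ^d with |𝓑| = n, and let k be a positive integer. Then either (i) there exist a subset 𝓑' ⊆ 𝓑 with |𝓑'| = k and an index i ∈ {1,…,d} such that the projections {π_i(B)}_{B ∈ 𝓑'} onto the i-th coordinate axis are pairwise disjoint, or (ii) there exists a subset 𝓑' ⊆ 𝓑 with |𝓑'| ≥ n/k^d such that ∩_{B ∈ 𝓑'} B ≠ ∅. -/
open MeasureTheory Set Pointwise Metric Function
open scoped RealInnerProductSpace ENNReal

/-!
A greedy sweep shows that finitely many closed intervals on a line contain either `k` pairwise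
disjoint ones or are all pierced by fewer than `k` points: take the interval whose right endpoint
`m` is leftmost; it is disjoint from every interval lying right of `m`, and every other interval
contains `m`. If no coordinate projection yields `k` disjoint intervals, choose for each coordinate
`i` a piercing set `Pᵢ` with `|Pᵢ| < k`. Every box then contains a point of the grid `∏ᵢ Pᵢ`, which
has at most `k^d` points, so by pigeonhole one grid point lies in at least `n / k^d` boxes.
-/

open Finset in
theorem Finset.exists_pairwiseDisjoint_or_exists_piercing {α β : Type*} [LinearOrder β]
    (I : α → Set β) (k : ℕ) (F : Finset α) (hI : ∀ x ∈ F, ∃ a b, a ≤ b ∧ I x = Set.Icc a b) :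
    (∃ F' ⊆ F, F'.card = k ∧ (F' : Set α).PairwiseDisjoint I) ∨
      ∃ P : Finset β, P.card < k ∧ ∀ x ∈ F, ∃ p ∈ P, p ∈ I x := by
  classical
  induction k generalizing F with
  | zero => exact Or.inl ⟨∅, empty_subset _, rfl, by simp⟩
  | succ k ih =>
    rcases F.eq_empty_or_nonempty with rfl | hne
    · exact Or.inr ⟨∅, by simp, by simp⟩
    have : Nonempty β := let ⟨x, hx⟩ := hne; let ⟨a, _⟩ := hI x hx; ⟨a⟩
    choose! a b hab hIab using hI
    obtain ⟨x₀, hx₀, hmin⟩ := F.exists_min_image b hne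
    set F₁ := F.filter fun x => b x₀ < a x
    have hF₁ : F₁ ⊆ F := filter_subset _ _
    have hx₀F₁ : x₀ ∉ F₁ := fun h => (mem_filter.1 h).2.not_ge (hab x₀ hx₀)
    have disjoint_x₀ : ∀ x ∈ F₁, Disjoint (I x₀) (I x) := by
      intro x hx
      rw [hIab x₀ hx₀, hIab x (hF₁ hx)]
      exact Set.disjoint_left.2 fun z hz hz' =>
        ((mem_filter.1 hx).2.trans_le hz'.1).not_ge hz.2
    rcases ih F₁ fun x hx => ⟨a x, b x, hab x (hF₁ hx), hIab x (hF₁ hx)⟩ with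
      ⟨F', hF', hcard, hdisj⟩ | ⟨P, hcard, hP⟩
    · refine Or.inl ⟨insert x₀ F', insert_subset hx₀ (hF'.trans hF₁), ?_, ?_⟩
      · rw [card_insert_of_notMem fun h => hx₀F₁ (hF' h), hcard]
      · rw [coe_insert, Set.pairwiseDisjoint_insert]
        exact ⟨hdisj, fun x hx _ => disjoint_x₀ x (hF' hx)⟩
    · refine Or.inr ⟨insert (b x₀) P, (card_insert_le _ _).trans_lt (by omega), fun x hx => ?_⟩
      by_cases hxF₁ : x ∈ F₁
      · obtain ⟨p, hp, hpx⟩ := hP x hxF₁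
        exact ⟨p, mem_insert_of_mem hp, hpx⟩
      · have hax : a x ≤ b x₀ := by simpa [F₁, hx] using hxF₁
        exact ⟨b x₀, mem_insert_self _ _, hIab x hx ▸ ⟨hax, hmin x hx⟩⟩

theorem IsBox.mem_of_forall_apply_mem_image {d : ℕ} {B : Set (Euc d)} (hB : IsBox B)
    {x : Euc d} (hx : ∀ i, x i ∈ (fun y : Euc d => y i) '' B) : x ∈ B := by
  obtain ⟨a, b, rfl⟩ := hB
  intro i
  obtain ⟨y, hy, hyi⟩ := hx i
  exact hyi ▸ hy i

theorem IsBox.image_apply_eq_Icc {d : ℕ} {B : Set (Euc d)} (hB : IsBox B) (hne : B.Nonempty)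
    (i : Fin d) : ∃ a b, a ≤ b ∧ (fun y : Euc d => y i) '' B = Icc a b := by
  obtain ⟨a, b, rfl⟩ := hB
  obtain ⟨x, hx⟩ := hne
  refine ⟨a i, b i, (hx i).1.trans (hx i).2, ?_⟩
  refine (image_subset_iff.2 fun y hy => ?_).antisymm fun t ht => ?_
  · exact (hy : ∀ j, y j ∈ Icc (a j) (b j)) i
  refine ⟨WithLp.toLp 2 (Function.update x.ofLp i t), fun j => ?_, by simp⟩
  rcases eq_or_ne j i with rfl | hj
  · simpa using ht
  · simpa [hj] using hx j

theorem exists_subset_card_ge_inter_nonempty_of_piercing {d k : ℕ} (𝓑 : Finset (Set (Euc d)))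
    (hbox : ∀ B ∈ 𝓑, IsBox B) (P : Fin d → Finset ℝ) (hP : ∀ i, (P i).card ≤ k)
    (hpierce : ∀ i, ∀ B ∈ 𝓑, ∃ p ∈ P i, p ∈ (fun x : Euc d => x i) '' B) :
    ∃ 𝓑' ⊆ 𝓑, (𝓑.card : ℝ) / k ^ d ≤ 𝓑'.card ∧ (⋂ B ∈ 𝓑', B).Nonempty := by
  classical
  rcases 𝓑.eq_empty_or_nonempty with rfl | hne
  · exact ⟨∅, subset_rfl, by simp, by simp⟩
  choose! c hcP hc using fun B hB i => hpierce i B hB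
  set grid := Fintype.piFinset P
  have hmaps : ∀ B ∈ 𝓑, c B ∈ grid := fun B hB => Fintype.mem_piFinset.2 (hcP B hB)
  have hgrid_ne : grid.Nonempty := (hne.image c).mono (Finset.image_subset_iff.2 hmaps)
  have hgrid : (grid.card : ℝ) ≤ (k : ℝ) ^ d := by
    rw [Fintype.card_piFinset]
    exact_mod_cast (Finset.prod_le_prod' fun i _ => hP i).trans_eq (by simp)
  have hgrid_pos : (0 : ℝ) < grid.card := by exact_mod_cast hgrid_ne.card_pos
  have hbound : grid.card • ((𝓑.card : ℝ) / k ^ d) ≤ 𝓑.card := by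
    rw [nsmul_eq_mul, mul_div_assoc', div_le_iff₀ (hgrid_pos.trans_le hgrid), mul_comm]
    gcongr
  obtain ⟨y, -, hy⟩ :=
    Finset.exists_le_card_fiber_of_nsmul_le_card_of_maps_to hmaps hgrid_ne hbound
  refine ⟨_, Finset.filter_subset _ _, hy, WithLp.toLp 2 y, Set.mem_iInter₂.2 fun B hB => ?_⟩
  obtain ⟨hB𝓑, rfl⟩ := Finset.mem_filter.1 hB
  exact (hbox B hB𝓑).mem_of_forall_apply_mem_image (hc B hB𝓑)

theorem stmt15_general (d : ℕ) (𝓑 : Finset (Set (Euc d)))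
    (hbox : ∀ B ∈ 𝓑, IsBox B ∧ B.Nonempty) (n : ℕ) (hn : 𝓑.card = n)
    (k : ℕ) :
    (∃ 𝓑' ⊆ 𝓑, 𝓑'.card = k ∧ ∃ i : Fin d,
      (𝓑' : Set (Set (Euc d))).Pairwise fun B B' =>
        Disjoint ((fun x : Euc d => x i) '' B) ((fun x : Euc d => x i) '' B')) ∨
    (∃ 𝓑' ⊆ 𝓑, (n : ℝ) / (k : ℝ) ^ d ≤ 𝓑'.card ∧ (⋂ B ∈ 𝓑', (B : Set (Euc d))).Nonempty) := by
  subst hn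
  by_cases hpierce : ∀ i : Fin d, ∃ P : Finset ℝ, P.card < k ∧
      ∀ B ∈ 𝓑, ∃ p ∈ P, p ∈ (fun x : Euc d => x i) '' B
  · choose P hPcard hP using hpierce
    exact Or.inr (exists_subset_card_ge_inter_nonempty_of_piercing 𝓑 (fun B hB => (hbox B hB).1)
      P (fun i => (hPcard i).le) hP)
  · obtain ⟨i, hi⟩ := not_forall.1 hpierce
    obtain ⟨𝓑', h𝓑', hcard, hdisj⟩ :=
      (Finset.exists_pairwiseDisjoint_or_exists_piercing (fun B : Set (Euc d) => (fun x => x i) '' B)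
        k 𝓑 fun B hB => (hbox B hB).1.image_apply_eq_Icc (hbox B hB).2 i).resolve_right hi
    exact Or.inl ⟨𝓑', h𝓑', hcard, i, hdisj⟩

theorem stmt15 (d : ℕ) (hd : 0 < d) (𝓑 : Finset (Set (Euc d)))
    (hbox : ∀ B ∈ 𝓑, IsBox B ∧ B.Nonempty) (n : ℕ) (hn : 𝓑.card = n)
    (k : ℕ) (hk : 0 < k) :
    (∃ 𝓑' ⊆ 𝓑, 𝓑'.card = k ∧ ∃ i : Fin d,
      (𝓑' : Set (Set (Euc d))).Pairwise fun B B' =>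
        Disjoint ((fun x : Euc d => x i) '' B) ((fun x : Euc d => x i) '' B')) ∨
    (∃ 𝓑' ⊆ 𝓑, (n : ℝ) / (k : ℝ) ^ d ≤ 𝓑'.card ∧ (⋂ B ∈ 𝓑', (B : Set (Euc d))).Nonempty) :=
  stmt15_general d 𝓑 hbox n hn k
end
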